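/- Assume the trust-region parameter block. Let Δ > 0 and let h, H ∈ ℝⁿ satisfy ‖h‖ ≥ ζ·Δ and ‖h − H‖ ≤ κ_grad·Δ. Let ared and pred be real numbers with ared ≥ pred − 2·κ_val·Δ² and pred ≥ κ_fcd·‖H‖·min{‖H‖/κ_bmh, Δ}. Then c₆ > 0 and −ared ≤ −c₆·‖h‖·Δ < 0. -/
import Mathlib


private lemma aux_stmt6 (κfcd κgrad κval t Δ hn Hn ared pred ζ : ℝ)
    (hΔ : 0 < Δ) (ht : t * ζ = 2 * κval + κfcd * κgrad) (htpos : 0 < t)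
    (hκfcd : 0 < κfcd) (hh : ζ * Δ ≤ hn) (hHn : hn - κgrad * Δ ≤ Hn)
    (hared : ared ≥ pred - 2 * κval * Δ ^ 2) (hpred : pred ≥ κfcd * Hn * Δ) :
    (κfcd - t) * hn * Δ ≤ ared := by
  nlinarith [mul_nonneg (mul_nonneg htpos.le hΔ.le) (sub_nonneg.2 hh),
    mul_nonneg (mul_nonneg hκfcd.le hΔ.le) (sub_nonneg.2 hHn)]

theorem stmt_6 {n : ℕ} (L κbmh κgrad κfcd η₂ η₁ η ζ : ℝ)
    (hL : 0 < L) (hκbmh : 1 ≤ κbmh) (hκgrad : 0 < κgrad) (hκfcd : 0 < κfcd)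
    (hη₂ : 0 < η₂) (hη₁ : η₁ ∈ Set.Ioo (0 : ℝ) 1)
    (hη : η ∈ Set.Ioo 0 (min η₁ (1 - η₁)))
    (hζ : ζ ≥ κgrad + max η₂
      (4 * ((L + κbmh + 2 * κgrad) / 4) / ((1 - η₁ - η) * min κfcd 1)))
    (Δ : ℝ) (hΔ : 0 < Δ)
    (h H : EuclideanSpace ℝ (Fin n))
    (hh : ‖h‖ ≥ ζ * Δ) (hhH : ‖h - H‖ ≤ κgrad * Δ)
    (ared pred : ℝ)
    (hared : ared ≥ pred - 2 * ((L + κbmh + 2 * κgrad) / 4) * Δ ^ 2)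
    (hpred : pred ≥ κfcd * ‖H‖ * min (‖H‖ / κbmh) Δ) :
    0 < κfcd - (2 * ((L + κbmh + 2 * κgrad) / 4) + κfcd * κgrad) / ζ ∧
      -ared ≤ -(κfcd - (2 * ((L + κbmh + 2 * κgrad) / 4) + κfcd * κgrad) / ζ) * ‖h‖ * Δ ∧
      -(κfcd - (2 * ((L + κbmh + 2 * κgrad) / 4) + κfcd * κgrad) / ζ) * ‖h‖ * Δ < 0 := by
  obtain ⟨hη₁0, hη₁1⟩ := hη₁
  obtain ⟨hη0, hηlt⟩ := hη
  have hηa : η < 1 - η₁ := lt_of_lt_of_le hηlt (min_le_right _ _)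
  set κval : ℝ := (L + κbmh + 2 * κgrad) / 4 with hκval
  have hκvalpos : 0 < κval := by rw [hκval]; linarith
  have hd : 0 < 1 - η₁ - η := by linarith
  have hd1 : 1 - η₁ - η < 1 := by linarith
  have hm : 0 < min κfcd 1 := lt_min hκfcd one_pos
  have hm1 : min κfcd 1 ≤ 1 := min_le_right _ _
  have hmf : min κfcd 1 ≤ κfcd := min_le_left _ _
  have hdm : 0 < (1 - η₁ - η) * min κfcd 1 := mul_pos hd hm
  have hX : 4 * κval / ((1 - η₁ - η) * min κfcd 1) ≤ ζ - κgrad := by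
    have := le_max_right η₂ (4 * κval / ((1 - η₁ - η) * min κfcd 1))
    linarith
  have hXpos : 0 < 4 * κval / ((1 - η₁ - η) * min κfcd 1) := by positivity
  have hζκ : 0 < ζ - κgrad := lt_of_lt_of_le hXpos hX
  have hζpos : 0 < ζ := by linarith
  have key : 4 * κval ≤ (ζ - κgrad) * ((1 - η₁ - η) * min κfcd 1) := by
    rw [div_le_iff₀ hdm] at hX
    linarith
  have hdm1 : (1 - η₁ - η) * min κfcd 1 ≤ 1 := by nlinarith
  have h4v : 4 * κval = L + κbmh + 2 * κgrad := by rw [hκval]; ring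
  have h4 : κbmh ≤ ζ - κgrad := by
    have hmul : (ζ - κgrad) * ((1 - η₁ - η) * min κfcd 1) ≤ (ζ - κgrad) * 1 :=
      mul_le_mul_of_nonneg_left hdm1 hζκ.le
    linarith
  have step1 : 4 * κval < (ζ - κgrad) * min κfcd 1 := by
    nlinarith [mul_pos (mul_pos hζκ hm) (show (0:ℝ) < 1 - (1 - η₁ - η) by linarith)]
  have step2 : 4 * κval < (ζ - κgrad) * κfcd := by nlinarith
  have hc6 : 0 < κfcd - (2 * κval + κfcd * κgrad) / ζ := by
    rw [sub_pos, div_lt_iff₀ hζpos]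
    have e : (ζ - κgrad) * κfcd = κfcd * ζ - κfcd * κgrad := by ring
    linarith
  have hnH : ζ * Δ - κgrad * Δ ≤ ‖H‖ := by
    have := norm_sub_norm_le h H
    linarith
  have hmin : min (‖H‖ / κbmh) Δ = Δ := by
    apply min_eq_right
    rw [le_div_iff₀ (by linarith : (0:ℝ) < κbmh)]
    have hmul : Δ * κbmh ≤ Δ * (ζ - κgrad) := mul_le_mul_of_nonneg_left h4 hΔ.le
    have e : Δ * (ζ - κgrad) = ζ * Δ - κgrad * Δ := by ring
    linarith
  rw [hmin] at hpred
  have ht : (2 * κval + κfcd * κgrad) / ζ * ζ = 2 * κval + κfcd * κgrad :=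
    div_mul_cancel₀ _ (ne_of_gt hζpos)
  have htpos : 0 < (2 * κval + κfcd * κgrad) / ζ := by positivity
  have hfinal : (κfcd - (2 * κval + κfcd * κgrad) / ζ) * ‖h‖ * Δ ≤ ared :=
    aux_stmt6 κfcd κgrad κval _ Δ ‖h‖ ‖H‖ ared pred ζ hΔ ht htpos hκfcd hh
      (by have := norm_sub_norm_le h H; linarith) hared hpred
  have hpos : 0 < (κfcd - (2 * κval + κfcd * κgrad) / ζ) * ‖h‖ * Δ := by
    have hhpos : 0 < ‖h‖ := lt_of_lt_of_le (mul_pos hζpos hΔ) hh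
    exact mul_pos (mul_pos hc6 hhpos) hΔ
  exact ⟨hc6, by linarith, by linarith⟩
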